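/- For the uniform random forest with N roots and n non-root vertices, with ξ_i the number of non-root vertices of the i-th tree, the i-th factorial moment of S_n^(r) = Σ_{j=1}^N 1{ξ_j = r} equals c_{i,n} = ((r+1)^{i(r−1)}/(r!)^i) · ((N−i)/N) · (N)_i (n)_{ri} / (n+N−(r+1)i)^{ri} · (1 − (r+1)i/(n+N))^{n−1}. -/

import Mathlib

/-!
Write `A_m(x) = x (x + m)^(m-1) / m!` (Abel polynomials, `A_0 = 1`). Then `A_t(1) = (t+1)^(t-1)/t!`,
so the forest law is `P(ξ = k) = n! / (N (N+n)^(n-1)) · ∏_j A_{k_j}(1)`. Abel's identity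
`∑_{a+b=m} A_a(x) A_b(y) = A_m(x+y)` follows from `A_{m+1}' = A_m(X + 1)` by comparing derivatives.
Peeling off the first tree and using `(c+1)_{i+1} = (c)_{i+1} + (i+1)(c)_i`, induction on the number
`M` of trees together with Abel's identity gives
`∑_{k} ∏_j A_{k_j}(1) · (#{j | k_j = r})_i = (M)_i A_r(1)^i A_{m-ri}(M-i)`,
and `A_{n-ri}(N-i) = (N-i)(n+N-(r+1)i)^(n-ri-1)/(n-ri)!` is the stated closed form.
-/

open Finset Polynomial

theorem Nat.succ_descFactorial_succ_eq_add (n k : ℕ) :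
    (n + 1).descFactorial (k + 1) = n.descFactorial (k + 1) + (k + 1) * n.descFactorial k := by
  rw [succ_descFactorial_succ, descFactorial_succ]
  rcases le_or_gt k n with h | h
  · rw [← add_mul]
    congr 1
    omega
  · simp [descFactorial_of_lt h]

theorem Finset.Nat.sum_antidiagonalTuple_succ {M : Type*} [AddCommMonoid M] (k n : ℕ)
    (f : (Fin (k + 1) → ℕ) → M) :
    ∑ x ∈ Nat.antidiagonalTuple (k + 1) n, f x =
      ∑ p ∈ antidiagonal n, ∑ x ∈ Nat.antidiagonalTuple k p.2, f (Fin.cons p.1 x) := by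
  change (((List.Nat.antidiagonalTuple (k + 1) n : List _) : Multiset _).map f).sum =
    (((List.Nat.antidiagonal n : List (ℕ × ℕ)) : Multiset (ℕ × ℕ)).map fun p : ℕ × ℕ =>
      (((List.Nat.antidiagonalTuple k p.2 : List _) : Multiset _).map
        fun x => f (Fin.cons p.1 x)).sum).sum
  simp [List.Nat.antidiagonalTuple, List.flatMap, List.sum_flatten, Function.comp_def]

theorem Finset.Nat.sum_antidiagonal_mul_ite_le_snd {R : Type*} [CommSemiring R] (f g : ℕ → R)
    (t m : ℕ) :
    ∑ p ∈ antidiagonal m, f p.1 * (if t ≤ p.2 then g (p.2 - t) else 0) =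
      if t ≤ m then ∑ p ∈ antidiagonal (m - t), f p.1 * g p.2 else 0 := by
  simp_rw [mul_ite, mul_zero]
  rw [← sum_filter]
  split_ifs with ht
  · rw [antidiagonal_filter_le_snd_of_le ht, sum_map]
    simp
  · refine sum_eq_zero fun p hp => ?_
    simp only [mem_filter, HasAntidiagonal.mem_antidiagonal] at hp
    omega

theorem Fin.card_filter_cons_eq (a r : ℕ) {M : ℕ} (k : Fin M → ℕ) :
    #{j | (Fin.cons a k : Fin (M + 1) → ℕ) j = r} = (if a = r then 1 else 0) + #{j | k j = r} := by
  rw [card_filter, card_filter, Fin.sum_univ_succ]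
  simp only [Fin.cons_zero, Fin.cons_succ]

theorem Polynomial.eq_of_derivative_eq_of_eval_zero_eq {R : Type*} [CommRing R]
    [IsAddTorsionFree R] {p q : R[X]} (hd : derivative p = derivative q)
    (h0 : p.eval 0 = q.eval 0) : p = q := by
  have hC := eq_C_of_derivative_eq_zero (p := p - q) (by rw [derivative_sub, hd, sub_self])
  rw [coeff_zero_eq_eval_zero, eval_sub, h0, sub_self, map_zero] at hC
  exact sub_eq_zero.mp hC

section Abel

variable (K : Type*) [Field K]

-- `X (X + m) ^ (m - 1) / m!`, with `m = 0` split off: there the truncated `m - 1` would give `X`.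
noncomputable def abelPoly : ℕ → K[X]
  | 0 => 1
  | m + 1 => C ((m + 1).factorial : K)⁻¹ * X * (X + C ((m : K) + 1)) ^ m

variable {K}

@[simp]
theorem abelPoly_zero : abelPoly K 0 = 1 := rfl

@[simp]
theorem eval_zero_abelPoly_succ (m : ℕ) : (abelPoly K (m + 1)).eval 0 = 0 := by
  simp [abelPoly]

theorem eval_abelPoly {m : ℕ} {x : K} (h : x + m ≠ 0) :
    (abelPoly K m).eval x = x * (x + m) ^ ((m : ℤ) - 1) / m.factorial := by
  rcases m with _ | m
  · simp_all
  · simp [abelPoly, div_eq_inv_mul, mul_assoc]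

variable [CharZero K]

theorem derivative_abelPoly_succ (m : ℕ) :
    derivative (abelPoly K (m + 1)) = (abelPoly K m).comp (X + 1) := by
  rcases m with _ | k
  · simp [abelPoly]
  · have hfac : ((k + 2).factorial : K)⁻¹ * ((k : K) + 2) = ((k + 1).factorial : K)⁻¹ := by
      have hk : (k : K) + 2 ≠ 0 := by exact_mod_cast (k + 1).succ_ne_zero
      rw [Nat.factorial_succ (k + 1)]
      push_cast
      rw [mul_inv, mul_comm, ← mul_assoc, show (k : K) + 1 + 1 = k + 2 by ring,
        mul_inv_cancel₀ hk, one_mul]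
    simp only [abelPoly, derivative_mul, derivative_C, derivative_X, derivative_pow,
      derivative_add, mul_comp, C_comp, X_comp, pow_comp, add_comp]
    rw [← hfac, C_mul]
    simp only [map_add, map_natCast, map_one, map_ofNat]
    push_cast
    ring

theorem sum_antidiagonal_abelPoly_mul_C_eval (m : ℕ) (y : K) :
    ∑ p ∈ antidiagonal m, abelPoly K p.1 * C ((abelPoly K p.2).eval y) =
      (abelPoly K m).comp (X + C y) := by
  induction m with
  | zero => simp
  | succ m ih =>
    apply eq_of_derivative_eq_of_eval_zero_eq
    · calc derivative (∑ p ∈ antidiagonal (m + 1), abelPoly K p.1 * C ((abelPoly K p.2).eval y))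
          = (∑ p ∈ antidiagonal m, abelPoly K p.1 * C ((abelPoly K p.2).eval y)).comp (X + 1) := by
            simp [Nat.sum_antidiagonal_succ, derivative_abelPoly_succ]
        _ = derivative ((abelPoly K (m + 1)).comp (X + C y)) := by
            rw [ih, derivative_comp, derivative_abelPoly_succ, comp_assoc, comp_assoc]
            simp only [derivative_add, derivative_X, derivative_C, add_zero, one_mul, add_comp,
              X_comp, C_comp, one_comp]
            congr 1
            ring
    · simp [eval_finsetSum, Nat.sum_antidiagonal_succ]

theorem sum_antidiagonal_eval_abelPoly_mul (m : ℕ) (x y : K) :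
    ∑ p ∈ antidiagonal m, (abelPoly K p.1).eval x * (abelPoly K p.2).eval y =
      (abelPoly K m).eval (x + y) := by
  simpa [eval_finsetSum] using congrArg (eval x) (sum_antidiagonal_abelPoly_mul_C_eval m y)

end Abel

section FactorialMoment

variable {R : Type*} [CommSemiring R]

def countFactorialMoment (w : ℕ → R) (r M m i : ℕ) : R :=
  ∑ k ∈ Nat.antidiagonalTuple M m, (∏ j, w (k j)) * ((#{j | k j = r}).descFactorial i : R)

theorem countFactorialMoment_succ (w : ℕ → R) (r M m i : ℕ) :
    countFactorialMoment w r (M + 1) m i = ∑ p ∈ antidiagonal m, w p.1 *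
      ∑ k ∈ Nat.antidiagonalTuple M p.2,
        (∏ j, w (k j)) * (((if p.1 = r then 1 else 0) + #{j | k j = r}).descFactorial i : R) := by
  simp only [countFactorialMoment, Nat.sum_antidiagonalTuple_succ, Fin.card_filter_cons_eq,
    Fin.prod_univ_succ, Fin.cons_zero, Fin.cons_succ, mul_sum, mul_assoc]

theorem countFactorialMoment_succ_zero (w : ℕ → R) (r M m : ℕ) :
    countFactorialMoment w r (M + 1) m 0 =
      ∑ p ∈ antidiagonal m, w p.1 * countFactorialMoment w r M p.2 0 := by
  rw [countFactorialMoment_succ]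
  simp only [countFactorialMoment, Nat.descFactorial_zero]

theorem countFactorialMoment_succ_succ (w : ℕ → R) (r M m i : ℕ) :
    countFactorialMoment w r (M + 1) m (i + 1) =
      ∑ p ∈ antidiagonal m, w p.1 * countFactorialMoment w r M p.2 (i + 1) +
        if r ≤ m then (i + 1) * w r * countFactorialMoment w r M (m - r) i else 0 := by
  have hsplit (p : ℕ × ℕ) : ∑ k ∈ Nat.antidiagonalTuple M p.2,
      (∏ j, w (k j)) * (((if p.1 = r then 1 else 0) + #{j | k j = r}).descFactorial (i + 1) : R) =
      countFactorialMoment w r M p.2 (i + 1) +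
        if p.1 = r then (i + 1) * countFactorialMoment w r M p.2 i else 0 := by
    split_ifs
    · simp only [countFactorialMoment, add_comm 1, Nat.succ_descFactorial_succ_eq_add]
      push_cast
      simp only [mul_add, sum_add_distrib, mul_sum, mul_left_comm]
    · simp only [countFactorialMoment, zero_add, add_zero]
  simp only [countFactorialMoment_succ, hsplit, mul_add, sum_add_distrib, mul_ite, mul_zero]
  rw [← sum_filter, HasAntidiagonal.filter_fst_eq_antidiagonal m r]
  split_ifs <;> simp [mul_left_comm, mul_assoc]

end FactorialMoment

section Forest

variable {K : Type*} [Field K] [CharZero K]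

theorem eval_one_abelPoly (t : ℕ) :
    (abelPoly K t).eval 1 = ((t : K) + 1) ^ ((t : ℤ) - 1) / t.factorial := by
  rw [eval_abelPoly (by rw [add_comm]; exact Nat.cast_add_one_ne_zero t), one_mul, add_comm]

theorem countFactorialMoment_abelPoly (r M m i : ℕ) :
    countFactorialMoment (fun t => (abelPoly K t).eval 1) r M m i =
      M.descFactorial i * (abelPoly K r).eval 1 ^ i *
        if r * i ≤ m then (abelPoly K (m - r * i)).eval ((M : K) - i) else 0 := by
  induction M generalizing m i with
  | zero =>
    rcases m with _ | m <;> rcases i with _ | i <;> simp [countFactorialMoment]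
  | succ M ih =>
    rcases i with _ | i
    · simp [countFactorialMoment_succ_zero, ih, sum_antidiagonal_eval_abelPoly_mul, add_comm]
    · have hshift : ∑ p ∈ antidiagonal m, (abelPoly K p.1).eval 1 *
            countFactorialMoment (fun t => (abelPoly K t).eval 1) r M p.2 (i + 1) =
          M.descFactorial (i + 1) * (abelPoly K r).eval 1 ^ (i + 1) *
            if r * (i + 1) ≤ m then (abelPoly K (m - r * (i + 1))).eval ((M : K) - i) else 0 := by
        simp only [ih, mul_left_comm _ (_ * _ : K), ← mul_sum]
        rw [Nat.sum_antidiagonal_mul_ite_le_snd (fun a => (abelPoly K a).eval 1)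
          (fun b => (abelPoly K b).eval _)]
        simp only [sum_antidiagonal_eval_abelPoly_mul]
        push_cast
        ring_nf
      rw [countFactorialMoment_succ_succ, hshift, ih, Nat.succ_descFactorial_succ_eq_add]
      by_cases h : r * (i + 1) ≤ m
      · have hr : r ≤ m := le_trans (Nat.le_mul_of_pos_right r i.succ_pos) h
        rw [if_pos h, if_pos h, if_pos hr, if_pos (by rw [mul_add_one] at h; omega),
          show m - r - r * i = m - r * (i + 1) by rw [mul_add_one]; omega]
        push_cast
        ring_nf
      · rw [if_neg h, if_neg h]
        split_ifs with hr hri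
        · exact absurd (by rw [mul_add_one]; omega) h
        all_goals simp

theorem factorial_mul_eval_abelPoly_div {n N r i : ℕ}
    (hn : 0 < n) (hi : (r + 1) * i < n + N) (h : r * i ≤ n) :
    n.factorial * (abelPoly K (n - r * i)).eval ((N : K) - i) / ((N : K) + n) ^ ((n : ℤ) - 1) =
      (N - i) * n.descFactorial (r * i) / ((n : K) + N - (r + 1) * i) ^ (r * i) *
        (1 - ((r : K) + 1) * i / ((n : K) + N)) ^ (n - 1) := by
  have hnN : (n : K) + N ≠ 0 := by exact_mod_cast (Nat.add_pos_left hn N).ne'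
  have hD : (n : K) + N - (r + 1) * i ≠ 0 := sub_ne_zero.mpr (by exact_mod_cast hi.ne')
  have hbase : 1 - ((r : K) + 1) * i / ((n : K) + N) = (n + N - (r + 1) * i) / (n + N) := by
    field_simp
  generalize hDdef : (n : K) + N - (r + 1) * i = D at hD hbase ⊢
  have hND : (N : K) - i + ((n - r * i : ℕ) : K) = D := by
    push_cast [← hDdef, Nat.cast_sub h]
    ring
  have hA : (abelPoly K (n - r * i)).eval ((N : K) - i) =
      (N - i) * (D ^ (n - 1) / D ^ (r * i)) / (n - r * i).factorial := by
    rw [eval_abelPoly (hND ▸ hD), hND, ← zpow_natCast, ← zpow_natCast, ← zpow_sub₀ hD]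
    congr 3
    omega
  have hfac : (n.factorial : K) = (n - r * i).factorial * n.descFactorial (r * i) := by
    exact_mod_cast (Nat.factorial_mul_descFactorial h).symm
  have hpow : ((N : K) + n) ^ ((n : ℤ) - 1) = (n + N) ^ (n - 1) := by
    rw [add_comm, ← zpow_natCast, Nat.cast_pred hn]
  have hfac0 : ((n - r * i).factorial : K) ≠ 0 := Nat.cast_ne_zero.mpr (Nat.factorial_ne_zero _)
  rw [hA, hfac, hbase, hpow, div_pow]
  field_simp

end Forest

theorem random_forest_factorial_moment_general (n N r i : ℕ) (hn : 0 < n)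
    (hi : (r + 1) * i < n + N) :
    ∑ k ∈ Finset.Nat.antidiagonalTuple N n,
        (((n.factorial : ℚ) / ∏ j, ((k j).factorial : ℚ)) *
            (∏ j, ((k j : ℚ) + 1) ^ ((k j : ℤ) - 1)) /
            ((N : ℚ) * ((N : ℚ) + n) ^ ((n : ℤ) - 1))) *
          ((Finset.univ.filter fun j : Fin N => k j = r).card.descFactorial i : ℚ) =
      ((r : ℚ) + 1) ^ ((i : ℤ) * ((r : ℤ) - 1)) / (r.factorial : ℚ) ^ i *
          (((N : ℚ) - i) / N) *
          ((N.descFactorial i : ℚ) * (n.descFactorial (r * i)) /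
            ((n : ℚ) + N - (r + 1) * i) ^ (r * i)) *
        (1 - ((r : ℚ) + 1) * i / ((n : ℚ) + N)) ^ (n - 1) := by
  have hsum : ∑ k ∈ Finset.Nat.antidiagonalTuple N n,
        (((n.factorial : ℚ) / ∏ j, ((k j).factorial : ℚ)) *
            (∏ j, ((k j : ℚ) + 1) ^ ((k j : ℤ) - 1)) /
            ((N : ℚ) * ((N : ℚ) + n) ^ ((n : ℤ) - 1))) *
          ((Finset.univ.filter fun j : Fin N => k j = r).card.descFactorial i : ℚ) =
      n.factorial / (N * ((N : ℚ) + n) ^ ((n : ℤ) - 1)) *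
        countFactorialMoment (fun t => (abelPoly ℚ t).eval 1) r N n i := by
    rw [countFactorialMoment, mul_sum]
    refine sum_congr rfl fun k _ => ?_
    simp only [eval_one_abelPoly, prod_div_distrib]
    ring
  have hweight : ((r : ℚ) + 1) ^ ((i : ℤ) * ((r : ℤ) - 1)) / (r.factorial : ℚ) ^ i =
      (abelPoly ℚ r).eval 1 ^ i := by
    rw [mul_comm, zpow_mul, zpow_natCast, ← div_pow, eval_one_abelPoly]
  rw [hsum, hweight, countFactorialMoment_abelPoly]
  split_ifs with h
  · linear_combination (N.descFactorial i * (abelPoly ℚ r).eval 1 ^ i / N : ℚ) *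
      factorial_mul_eval_abelPoly_div (K := ℚ) hn hi h
  · simp [Nat.descFactorial_eq_zero_iff_lt.mpr (not_le.mp h)]

theorem random_forest_factorial_moment (n N r i : ℕ) (hn : 0 < n) (hN : 0 < N)
    (hi : (r + 1) * i < n + N) :
    ∑ k ∈ Finset.Nat.antidiagonalTuple N n,
        (((n.factorial : ℚ) / ∏ j, ((k j).factorial : ℚ)) *
            (∏ j, ((k j : ℚ) + 1) ^ ((k j : ℤ) - 1)) /
            ((N : ℚ) * ((N : ℚ) + n) ^ ((n : ℤ) - 1))) *
          ((Finset.univ.filter fun j : Fin N => k j = r).card.descFactorial i : ℚ) =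
      ((r : ℚ) + 1) ^ ((i : ℤ) * ((r : ℤ) - 1)) / (r.factorial : ℚ) ^ i *
          (((N : ℚ) - i) / N) *
          ((N.descFactorial i : ℚ) * (n.descFactorial (r * i)) /
            ((n : ℚ) + N - (r + 1) * i) ^ (r * i)) *
        (1 - ((r : ℚ) + 1) * i / ((n : ℚ) + N)) ^ (n - 1) :=
  random_forest_factorial_moment_general n N r i hn hi
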